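/- Every valid term t of RST is RST-absolute: for every transitive model M of RST and all values of the free variables of t taken in M, the relativization t_M equals t (evaluated in V). -/
import Mathlib


mutual
/-- Terms of the language of RST: variables and class terms `{x | φ}`. -/
inductive RTerm : Type
  | var : ℕ → RTerm
  | cls : ℕ → RFormula → RTerm

/-- Formulas of the language of RST. -/
inductive RFormula : Type
  | mem : RTerm → RTerm → RFormula
  | eq  : RTerm → RTerm → RFormula
  | not : RFormula → RFormula
  | and : RFormula → RFormula → RFormula
  | or  : RFormula → RFormula → RFormula
  | ex  : ℕ → RFormula → RFormula
end

mutual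
/-- Free variables of a term. -/
def RTerm.fv : RTerm → Finset ℕ
  | .var n => {n}
  | .cls x φ => φ.fv.erase x

/-- Free variables of a formula. -/
def RFormula.fv : RFormula → Finset ℕ
  | .mem t s => t.fv ∪ s.fv
  | .eq t s => t.fv ∪ s.fv
  | .not φ => φ.fv
  | .and φ ψ => φ.fv ∪ ψ.fv
  | .or φ ψ => φ.fv ∪ ψ.fv
  | .ex x φ => φ.fv.erase x
end

/-- The safety relation `≻_RST`. -/
inductive Safe : RFormula → Finset ℕ → Prop
  | atom_mem (t s : RTerm) : Safe (.mem t s) ∅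
  | atom_eq (t s : RTerm) : Safe (.eq t s) ∅
  | eq_left (x : ℕ) (t : RTerm) : x ∉ t.fv → Safe (.eq (.var x) t) {x}
  | eq_right (x : ℕ) (t : RTerm) : x ∉ t.fv → Safe (.eq t (.var x)) {x}
  | mem_left (x : ℕ) (t : RTerm) : x ∉ t.fv → Safe (.mem (.var x) t) {x}
  | mem_self (x : ℕ) : Safe (.mem (.var x) (.var x)) {x}
  | not (φ : RFormula) : Safe φ ∅ → Safe (.not φ) ∅
  | or (φ ψ : RFormula) (X : Finset ℕ) : Safe φ X → Safe ψ X → Safe (.or φ ψ) X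
  | and (φ ψ : RFormula) (X Y : Finset ℕ) :
      Safe φ X → Safe ψ Y → Y ∩ φ.fv = ∅ → Safe (.and φ ψ) (X ∪ Y)
  | ex (y : ℕ) (φ : RFormula) (X : Finset ℕ) :
      y ∈ X → Safe φ X → Safe (.ex y φ) (X \ {y})

mutual
/-- Well-formed terms of RST: the body of a class term must be safe for its variable. -/
inductive WFTerm : RTerm → Prop
  | var (n : ℕ) : WFTerm (.var n)
  | cls (x : ℕ) (φ : RFormula) : WFForm φ → Safe φ {x} → WFTerm (.cls x φ)

/-- Well-formed formulas of RST. -/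
inductive WFForm : RFormula → Prop
  | mem {t s : RTerm} : WFTerm t → WFTerm s → WFForm (.mem t s)
  | eq {t s : RTerm} : WFTerm t → WFTerm s → WFForm (.eq t s)
  | not {φ : RFormula} : WFForm φ → WFForm (.not φ)
  | and {φ ψ : RFormula} : WFForm φ → WFForm ψ → WFForm (.and φ ψ)
  | or {φ ψ : RFormula} : WFForm φ → WFForm ψ → WFForm (.or φ ψ)
  | ex (x : ℕ) {φ : RFormula} : WFForm φ → WFForm (.ex x φ)
end
open scoped Classical

mutual
/-- Evaluation of a term in the cumulative universe `V` (modelled by `ZFSet`);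
a class term denotes the set which has exactly the members specified by its body,
if such a set exists, and `∅` otherwise. -/
noncomputable def RTerm.eval : RTerm → (ℕ → ZFSet.{0}) → ZFSet.{0}
  | .var n, v => v n
  | .cls x φ, v =>
      if h : ∃ s : ZFSet, ∀ z : ZFSet, z ∈ s ↔ (RFormula.sat' φ (Function.update v x z)).down.down then
        h.choose
      else ∅

/-- Satisfaction of a formula in the cumulative universe `V` (wrapped in `ULift (PLift _)`
so that it lives in the same universe as `ZFSet`). -/
noncomputable def RFormula.sat' : RFormula → (ℕ → ZFSet.{0}) → ULift.{1} (PLift Prop)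
  | .mem t s, v => ⟨⟨t.eval v ∈ s.eval v⟩⟩
  | .eq t s, v => ⟨⟨t.eval v = s.eval v⟩⟩
  | .not φ, v => ⟨⟨¬ (φ.sat' v).down.down⟩⟩
  | .and φ ψ, v => ⟨⟨(φ.sat' v).down.down ∧ (ψ.sat' v).down.down⟩⟩
  | .or φ ψ, v => ⟨⟨(φ.sat' v).down.down ∨ (ψ.sat' v).down.down⟩⟩
  | .ex x φ, v => ⟨⟨∃ z : ZFSet.{0}, (φ.sat' (Function.update v x z)).down.down⟩⟩
end

/-- Satisfaction of a formula of RST in the cumulative universe `V`. -/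
noncomputable def RFormula.sat (φ : RFormula) (v : ℕ → ZFSet.{0}) : Prop := (φ.sat' v).down.down

mutual
/-- Relativization to a transitive set `M`: evaluation of terms, where the class term
`{x ∣ φ}` is relativized to `{x ∣ x ∈ M ∧ φ_M}`. -/
noncomputable def RTerm.evalIn (M : ZFSet.{0}) : RTerm → (ℕ → ZFSet.{0}) → ZFSet.{0}
  | .var n, v => v n
  | .cls x φ, v => ZFSet.sep (fun z => (RFormula.satIn' M φ (Function.update v x z)).down.down) M

/-- Relativization to `M` of satisfaction: quantifiers are bounded to `M`. -/
noncomputable def RFormula.satIn' (M : ZFSet.{0}) : RFormula → (ℕ → ZFSet.{0}) → ULift.{1} (PLift Prop)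
  | .mem t s, v => ⟨⟨RTerm.evalIn M t v ∈ RTerm.evalIn M s v⟩⟩
  | .eq t s, v => ⟨⟨RTerm.evalIn M t v = RTerm.evalIn M s v⟩⟩
  | .not φ, v => ⟨⟨¬ (RFormula.satIn' M φ v).down.down⟩⟩
  | .and φ ψ, v => ⟨⟨(RFormula.satIn' M φ v).down.down ∧ (RFormula.satIn' M ψ v).down.down⟩⟩
  | .or φ ψ, v => ⟨⟨(RFormula.satIn' M φ v).down.down ∨ (RFormula.satIn' M ψ v).down.down⟩⟩
  | .ex x φ, v => ⟨⟨∃ z : ZFSet.{0}, z ∈ M ∧ (RFormula.satIn' M φ (Function.update v x z)).down.down⟩⟩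
end

/-- The relativization `φ_M` of a formula `φ` to `M`, as a satisfaction relation. -/
noncomputable def RFormula.satIn (M : ZFSet.{0}) (φ : RFormula) (v : ℕ → ZFSet.{0}) : Prop :=
  (φ.satIn' M v).down.down

/-- `M` is a transitive model of RST: `M` is transitive and satisfies the comprehension
schema for `≻_RST`-safe formulas, i.e. for every formula `φ` safe for `{x}` with parameters
in `M`, the set `{z ∈ M ∣ φ_M(z)}` is an element of `M`.  (Extensionality and ∈-induction
hold automatically in every transitive set of ZF-sets.) -/
def ModelRST (M : ZFSet.{0}) : Prop :=
  M.IsTransitive ∧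
    ∀ (φ : RFormula) (x : ℕ) (v : ℕ → ZFSet.{0}), WFForm φ → Safe φ {x} →
      (∀ n, v n ∈ M) →
        ZFSet.sep (fun z => RFormula.satIn M φ (Function.update v x z)) M ∈ M


/-! ### Auxiliary lemmas -/

section Aux

open RFormula RTerm

lemma sat_def (φ : RFormula) (v : ℕ → ZFSet.{0}) : RFormula.sat φ v = (φ.sat' v).down.down := rfl
lemma satIn_def (M : ZFSet.{0}) (φ : RFormula) (v : ℕ → ZFSet.{0}) :
    RFormula.satIn M φ v = (φ.satIn' M v).down.down := rfl

lemma sat_mem_iff (t s : RTerm) (v : ℕ → ZFSet.{0}) :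
    RFormula.sat (.mem t s) v ↔ t.eval v ∈ s.eval v := by
  rw [sat_def, RFormula.sat']

lemma sat_eq_iff (t s : RTerm) (v : ℕ → ZFSet.{0}) :
    RFormula.sat (.eq t s) v ↔ t.eval v = s.eval v := by
  rw [sat_def, RFormula.sat']

lemma sat_not_iff (φ : RFormula) (v : ℕ → ZFSet.{0}) :
    RFormula.sat (.not φ) v ↔ ¬ RFormula.sat φ v := by
  rw [sat_def, RFormula.sat']; rfl

lemma sat_and_iff (φ ψ : RFormula) (v : ℕ → ZFSet.{0}) :
    RFormula.sat (.and φ ψ) v ↔ RFormula.sat φ v ∧ RFormula.sat ψ v := by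
  rw [sat_def, RFormula.sat']; rfl

lemma sat_or_iff (φ ψ : RFormula) (v : ℕ → ZFSet.{0}) :
    RFormula.sat (.or φ ψ) v ↔ RFormula.sat φ v ∨ RFormula.sat ψ v := by
  rw [sat_def, RFormula.sat']; rfl

lemma sat_ex_iff (x : ℕ) (φ : RFormula) (v : ℕ → ZFSet.{0}) :
    RFormula.sat (.ex x φ) v ↔ ∃ z : ZFSet.{0}, RFormula.sat φ (Function.update v x z) := by
  rw [sat_def, RFormula.sat']; rfl

lemma satIn_mem_iff (M : ZFSet.{0}) (t s : RTerm) (v : ℕ → ZFSet.{0}) :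
    RFormula.satIn M (.mem t s) v ↔ RTerm.evalIn M t v ∈ RTerm.evalIn M s v := by
  rw [satIn_def, RFormula.satIn']

lemma satIn_eq_iff (M : ZFSet.{0}) (t s : RTerm) (v : ℕ → ZFSet.{0}) :
    RFormula.satIn M (.eq t s) v ↔ RTerm.evalIn M t v = RTerm.evalIn M s v := by
  rw [satIn_def, RFormula.satIn']

lemma satIn_not_iff (M : ZFSet.{0}) (φ : RFormula) (v : ℕ → ZFSet.{0}) :
    RFormula.satIn M (.not φ) v ↔ ¬ RFormula.satIn M φ v := by
  rw [satIn_def, RFormula.satIn']; rfl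

lemma satIn_and_iff (M : ZFSet.{0}) (φ ψ : RFormula) (v : ℕ → ZFSet.{0}) :
    RFormula.satIn M (.and φ ψ) v ↔ RFormula.satIn M φ v ∧ RFormula.satIn M ψ v := by
  rw [satIn_def, RFormula.satIn']; rfl

lemma satIn_or_iff (M : ZFSet.{0}) (φ ψ : RFormula) (v : ℕ → ZFSet.{0}) :
    RFormula.satIn M (.or φ ψ) v ↔ RFormula.satIn M φ v ∨ RFormula.satIn M ψ v := by
  rw [satIn_def, RFormula.satIn']; rfl

lemma satIn_ex_iff (M : ZFSet.{0}) (x : ℕ) (φ : RFormula) (v : ℕ → ZFSet.{0}) :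
    RFormula.satIn M (.ex x φ) v ↔
      ∃ z : ZFSet.{0}, z ∈ M ∧ RFormula.satIn M φ (Function.update v x z) := by
  rw [satIn_def, RFormula.satIn']; rfl

lemma evalIn_var (M : ZFSet.{0}) (n : ℕ) (v : ℕ → ZFSet.{0}) :
    RTerm.evalIn M (.var n) v = v n := by rw [RTerm.evalIn]

lemma eval_var (n : ℕ) (v : ℕ → ZFSet.{0}) : RTerm.eval (.var n) v = v n := by rw [RTerm.eval]

/-! Congruence: evaluation and satisfaction only depend on free variables. -/
mutual
theorem eval_congr : ∀ (t : RTerm) (v w : ℕ → ZFSet.{0}),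
    (∀ n ∈ t.fv, v n = w n) → t.eval v = t.eval w
  | .var n, v, w, h => h n (by simp [RTerm.fv])

  | .cls x φ, v, w, h => by
    have hz : ∀ z : ZFSet.{0}, RFormula.sat' φ (Function.update v x z)
        = RFormula.sat' φ (Function.update w x z) := by
      intro z
      refine sat'_congr φ _ _ (fun n hn => ?_)
      rcases eq_or_ne n x with rfl | hne
      · simp
      · simp only [Function.update_of_ne hne]
        exact h n (by simp [RTerm.fv, Finset.mem_erase, hne, hn])
    simp only [RTerm.eval, hz]
  termination_by t => sizeOf t

theorem sat'_congr : ∀ (φ : RFormula) (v w : ℕ → ZFSet.{0}),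
    (∀ n ∈ φ.fv, v n = w n) → φ.sat' v = φ.sat' w
  | .mem t s, v, w, h => by
    simp only [RFormula.sat',
      eval_congr t v w (fun n hn => h n (by simp [RFormula.fv, hn])),
      eval_congr s v w (fun n hn => h n (by simp [RFormula.fv, hn]))]
  | .eq t s, v, w, h => by
    simp only [RFormula.sat',
      eval_congr t v w (fun n hn => h n (by simp [RFormula.fv, hn])),
      eval_congr s v w (fun n hn => h n (by simp [RFormula.fv, hn]))]
  | .not φ, v, w, h => by
    simp only [RFormula.sat', sat'_congr φ v w (fun n hn => h n (by simpa [RFormula.fv] using hn))]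
  | .and φ ψ, v, w, h => by
    simp only [RFormula.sat',
      sat'_congr φ v w (fun n hn => h n (by simp [RFormula.fv, hn])),
      sat'_congr ψ v w (fun n hn => h n (by simp [RFormula.fv, hn]))]
  | .or φ ψ, v, w, h => by
    simp only [RFormula.sat',
      sat'_congr φ v w (fun n hn => h n (by simp [RFormula.fv, hn])),
      sat'_congr ψ v w (fun n hn => h n (by simp [RFormula.fv, hn]))]
  | .ex x φ, v, w, h => by
    have hz : ∀ z : ZFSet.{0}, RFormula.sat' φ (Function.update v x z)
        = RFormula.sat' φ (Function.update w x z) := by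
      intro z
      refine sat'_congr φ _ _ (fun n hn => ?_)
      rcases eq_or_ne n x with rfl | hne
      · simp
      · simp only [Function.update_of_ne hne]
        exact h n (by simp [RFormula.fv, Finset.mem_erase, hne, hn])
    simp only [RFormula.sat', hz]
  termination_by φ => sizeOf φ
end

mutual
theorem evalIn_congr (M : ZFSet.{0}) : ∀ (t : RTerm) (v w : ℕ → ZFSet.{0}),
    (∀ n ∈ t.fv, v n = w n) → RTerm.evalIn M t v = RTerm.evalIn M t w
  | .var n, v, w, h => h n (by simp [RTerm.fv])
  | .cls x φ, v, w, h => by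
    have hz : ∀ z : ZFSet.{0}, RFormula.satIn' M φ (Function.update v x z)
        = RFormula.satIn' M φ (Function.update w x z) := by
      intro z
      refine satIn'_congr M φ _ _ (fun n hn => ?_)
      rcases eq_or_ne n x with rfl | hne
      · simp
      · simp only [Function.update_of_ne hne]
        exact h n (by simp [RTerm.fv, Finset.mem_erase, hne, hn])
    simp only [RTerm.evalIn, hz]
  termination_by t => sizeOf t

theorem satIn'_congr (M : ZFSet.{0}) : ∀ (φ : RFormula) (v w : ℕ → ZFSet.{0}),
    (∀ n ∈ φ.fv, v n = w n) → RFormula.satIn' M φ v = RFormula.satIn' M φ w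
  | .mem t s, v, w, h => by
    simp only [RFormula.satIn',
      evalIn_congr M t v w (fun n hn => h n (by simp [RFormula.fv, hn])),
      evalIn_congr M s v w (fun n hn => h n (by simp [RFormula.fv, hn]))]
  | .eq t s, v, w, h => by
    simp only [RFormula.satIn',
      evalIn_congr M t v w (fun n hn => h n (by simp [RFormula.fv, hn])),
      evalIn_congr M s v w (fun n hn => h n (by simp [RFormula.fv, hn]))]
  | .not φ, v, w, h => by
    simp only [RFormula.satIn',
      satIn'_congr M φ v w (fun n hn => h n (by simpa [RFormula.fv] using hn))]
  | .and φ ψ, v, w, h => by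
    simp only [RFormula.satIn',
      satIn'_congr M φ v w (fun n hn => h n (by simp [RFormula.fv, hn])),
      satIn'_congr M ψ v w (fun n hn => h n (by simp [RFormula.fv, hn]))]
  | .or φ ψ, v, w, h => by
    simp only [RFormula.satIn',
      satIn'_congr M φ v w (fun n hn => h n (by simp [RFormula.fv, hn])),
      satIn'_congr M ψ v w (fun n hn => h n (by simp [RFormula.fv, hn]))]
  | .ex x φ, v, w, h => by
    have hz : ∀ z : ZFSet.{0}, RFormula.satIn' M φ (Function.update v x z)
        = RFormula.satIn' M φ (Function.update w x z) := by
      intro z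
      refine satIn'_congr M φ _ _ (fun n hn => ?_)
      rcases eq_or_ne n x with rfl | hne
      · simp
      · simp only [Function.update_of_ne hne]
        exact h n (by simp [RFormula.fv, Finset.mem_erase, hne, hn])
    simp only [RFormula.satIn', hz]
  termination_by φ => sizeOf φ
end

lemma sat_congr (φ : RFormula) {v w : ℕ → ZFSet.{0}} (h : ∀ n ∈ φ.fv, v n = w n) :
    RFormula.sat φ v ↔ RFormula.sat φ w := by
  rw [sat_def, sat_def, sat'_congr φ v w h]

lemma satIn_congr (M : ZFSet.{0}) (φ : RFormula) {v w : ℕ → ZFSet.{0}}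
    (h : ∀ n ∈ φ.fv, v n = w n) : RFormula.satIn M φ v ↔ RFormula.satIn M φ w := by
  rw [satIn_def, satIn_def, satIn'_congr M φ v w h]

/-- The safety set is contained in the free variables. -/
lemma safe_fv {φ : RFormula} {X : Finset ℕ} (hs : Safe φ X) : X ⊆ φ.fv := by
  induction hs with
  | atom_mem t s => simp
  | atom_eq t s => simp
  | eq_left x t hx =>
      intro y hy; rw [Finset.mem_singleton] at hy; subst hy
      simp [RFormula.fv, RTerm.fv]
  | eq_right x t hx =>
      intro y hy; rw [Finset.mem_singleton] at hy; subst hy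
      simp [RFormula.fv, RTerm.fv]
  | mem_left x t hx =>
      intro y hy; rw [Finset.mem_singleton] at hy; subst hy
      simp [RFormula.fv, RTerm.fv]
  | mem_self x =>
      intro y hy; rw [Finset.mem_singleton] at hy; subst hy
      simp [RFormula.fv, RTerm.fv]
  | not φ h ih => simp
  | or φ ψ X h1 h2 ih1 ih2 =>
      intro y hy; simp only [RFormula.fv, Finset.mem_union]; exact Or.inl (ih1 hy)
  | and φ ψ X Y h1 h2 hd ih1 ih2 =>
      simp only [RFormula.fv]; exact Finset.union_subset_union ih1 ih2
  | ex y φ X hy h ih =>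
      intro z hz; rw [Finset.mem_sdiff, Finset.mem_singleton] at hz
      simp only [RFormula.fv, Finset.mem_erase]
      exact ⟨hz.2, ih hz.1⟩

/-- Relativized class terms take values in the model. -/
lemma evalIn_mem_model (M : ZFSet.{0}) (hM : ModelRST M) (t : RTerm) (ht : WFTerm t)
    (v : ℕ → ZFSet.{0}) (hv : ∀ n, v n ∈ M) : RTerm.evalIn M t v ∈ M := by
  cases ht with
  | var n => rw [evalIn_var]; exact hv n
  | cls x φ hwφ hsφ =>
      rw [RTerm.evalIn]
      exact hM.2 φ x v hwφ hsφ hv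

mutual
/-- Absoluteness of well-formed terms (auxiliary, mutually recursive form). -/
theorem termAbs (M : ZFSet.{0}) (hM : ModelRST M) (t : RTerm) (ht : WFTerm t)
    (v : ℕ → ZFSet.{0}) (hv : ∀ n, v n ∈ M) : RTerm.evalIn M t v = t.eval v := by
  cases t with
  | var n => rw [evalIn_var, eval_var]
  | cls x φ =>
    have hwφ : WFForm φ := by cases ht with | cls _ _ hw _ => exact hw
    have hsφ : Safe φ {x} := by cases ht with | cls _ _ _ hs => exact hs
    have key : ∀ z : ZFSet.{0},
        (z ∈ M ∧ RFormula.satIn M φ (Function.update v x z)) ↔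
          RFormula.sat φ (Function.update v x z) := by
      intro z
      have hv' : ∀ n ∉ ({x} : Finset ℕ), Function.update v x z n ∈ M := by
        intro n hn
        rw [Finset.mem_singleton] at hn
        rw [Function.update_of_ne hn]
        exact hv n
      have H := safeAbs M hM φ {x} hsφ hwφ (Function.update v x z) hv'
      constructor
      · intro hz
        exact H.1.mpr hz.2
      · intro hz
        refine ⟨?_, H.1.mp hz⟩
        have := H.2 hz x (Finset.mem_singleton_self x)
        rwa [Function.update_self] at this
    have hEx : ∃ s : ZFSet.{0}, ∀ z : ZFSet.{0},
        z ∈ s ↔ (RFormula.sat' φ (Function.update v x z)).down.down := by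
      refine ⟨ZFSet.sep (fun z => (RFormula.satIn' M φ (Function.update v x z)).down.down) M, ?_⟩
      intro z
      rw [ZFSet.mem_sep]
      exact key z
    rw [RTerm.evalIn, RTerm.eval, dif_pos hEx]
    have hspec := hEx.choose_spec
    refine ZFSet.ext fun z => ?_
    rw [ZFSet.mem_sep, hspec z]
    exact key z
  termination_by sizeOf t

/-- Absoluteness of safe formulas: on valuations taking values in `M` outside of `X`,
satisfaction in `V` agrees with relativized satisfaction, and satisfaction forces the
values of the variables in `X` into `M`. -/
theorem safeAbs (M : ZFSet.{0}) (hM : ModelRST M) (φ : RFormula) (X : Finset ℕ)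
    (hs : Safe φ X) (hw : WFForm φ) (v : ℕ → ZFSet.{0}) (hv : ∀ n ∉ X, v n ∈ M) :
    (RFormula.sat φ v ↔ RFormula.satIn M φ v) ∧
      (RFormula.sat φ v → ∀ x ∈ X, v x ∈ M) := by
  cases hs with
  | atom_mem t s =>
    have wt : WFTerm t := by cases hw with | mem h1 h2 => exact h1
    have ws : WFTerm s := by cases hw with | mem h1 h2 => exact h2
    have hv' : ∀ n, v n ∈ M := fun n => hv n (Finset.notMem_empty n)
    have e1 := termAbs M hM t wt v hv'
    have e2 := termAbs M hM s ws v hv'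
    constructor
    · rw [sat_mem_iff, satIn_mem_iff, e1, e2]
    · intro _ x hx; exact absurd hx (Finset.notMem_empty x)
  | atom_eq t s =>
    have wt : WFTerm t := by cases hw with | eq h1 h2 => exact h1
    have ws : WFTerm s := by cases hw with | eq h1 h2 => exact h2
    have hv' : ∀ n, v n ∈ M := fun n => hv n (Finset.notMem_empty n)
    have e1 := termAbs M hM t wt v hv'
    have e2 := termAbs M hM s ws v hv'
    constructor
    · rw [sat_eq_iff, satIn_eq_iff, e1, e2]
    · intro _ x hx; exact absurd hx (Finset.notMem_empty x)
  | eq_left x t hx =>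
    have wt : WFTerm t := by cases hw with | eq h1 h2 => exact h2
    obtain ⟨hEeq, hEM⟩ := atomTermAbs M hM t wt x hx v (fun n hn => hv n (by simpa using hn))
    constructor
    · rw [sat_eq_iff, satIn_eq_iff, eval_var, evalIn_var, hEeq]
    · intro hsat y hy
      rw [Finset.mem_singleton] at hy; subst hy
      rw [sat_eq_iff, eval_var] at hsat
      rw [hsat, hEeq]
      exact hEM
  | eq_right x t hx =>
    have wt : WFTerm t := by cases hw with | eq h1 h2 => exact h1
    obtain ⟨hEeq, hEM⟩ := atomTermAbs M hM t wt x hx v (fun n hn => hv n (by simpa using hn))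
    constructor
    · rw [sat_eq_iff, satIn_eq_iff, eval_var, evalIn_var, hEeq]
    · intro hsat y hy
      rw [Finset.mem_singleton] at hy; subst hy
      rw [sat_eq_iff, eval_var] at hsat
      rw [← hsat, hEeq]
      exact hEM
  | mem_left x t hx =>
    have wt : WFTerm t := by cases hw with | mem h1 h2 => exact h2
    obtain ⟨hEeq, hEM⟩ := atomTermAbs M hM t wt x hx v (fun n hn => hv n (by simpa using hn))
    constructor
    · rw [sat_mem_iff, satIn_mem_iff, eval_var, evalIn_var, hEeq]
    · intro hsat y hy
      rw [Finset.mem_singleton] at hy; subst hy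
      rw [sat_mem_iff, eval_var, hEeq] at hsat
      exact hM.1 _ hEM hsat
  | mem_self x =>
    constructor
    · rw [sat_mem_iff, satIn_mem_iff, eval_var, evalIn_var]
    · intro hsat y hy
      rw [sat_mem_iff, eval_var] at hsat
      exact absurd hsat (ZFSet.mem_irrefl _)
  | not φ h =>
    have wφ : WFForm φ := by cases hw with | not h1 => exact h1
    have IH := safeAbs M hM φ ∅ h wφ v hv
    constructor
    · rw [sat_not_iff, satIn_not_iff]; exact not_congr IH.1
    · intro _ x hx; exact absurd hx (Finset.notMem_empty x)
  | or φ ψ X h1 h2 =>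
    have wφ : WFForm φ := by cases hw with | or a b => exact a
    have wψ : WFForm ψ := by cases hw with | or a b => exact b
    have IH1 := safeAbs M hM φ X h1 wφ v hv
    have IH2 := safeAbs M hM ψ X h2 wψ v hv
    constructor
    · rw [sat_or_iff, satIn_or_iff]; exact or_congr IH1.1 IH2.1
    · intro hsat x hx
      rw [sat_or_iff] at hsat
      rcases hsat with hsat | hsat
      · exact IH1.2 hsat x hx
      · exact IH2.2 hsat x hx
  | and φ ψ X Y h1 h2 hd =>
    have wφ : WFForm φ := by cases hw with | and a b => exact a
    have wψ : WFForm ψ := by cases hw with | and a b => exact b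
    obtain ⟨n0, hn0⟩ := Infinite.exists_notMem_finset (X ∪ Y)
    have hc : v n0 ∈ M := hv n0 hn0
    set c := v n0 with hcdef
    -- the modified valuation for φ
    have hYφ : ∀ n ∈ φ.fv, n ∉ Y := by
      intro n hn hnY
      have : n ∈ Y ∩ φ.fv := Finset.mem_inter.mpr ⟨hnY, hn⟩
      rw [hd] at this
      exact absurd this (Finset.notMem_empty n)
    have hXY : ∀ x ∈ X, x ∉ Y := fun x hx => hYφ x (safe_fv h1 hx)
    set v' : ℕ → ZFSet.{0} := fun n => if n ∈ Y then c else v n with hv'def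
    have agreeφ : ∀ n ∈ φ.fv, v n = v' n := by
      intro n hn
      simp only [hv'def, if_neg (hYφ n hn)]
    have hv'X : ∀ n ∉ X, v' n ∈ M := by
      intro n hn
      by_cases hnY : n ∈ Y
      · simp only [hv'def, if_pos hnY]; exact hc
      · simp only [hv'def, if_neg hnY]
        exact hv n (by simp [Finset.mem_union, hn, hnY])
    have IHφ := safeAbs M hM φ X h1 wφ v' hv'X
    have hXv : RFormula.sat φ v → ∀ x ∈ X, v x ∈ M := by
      intro hsφ x hx
      have := IHφ.2 ((sat_congr φ agreeφ).mp hsφ) x hx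
      simpa only [hv'def, if_neg (hXY x hx)] using this
    -- given the X-values are in M, build the modified valuation for ψ
    have wfact : ∀ (hXM : ∀ x ∈ X, v x ∈ M), ∃ w : ℕ → ZFSet.{0},
        (∀ n ∈ ψ.fv, v n = w n) ∧ (∀ n ∉ Y, w n ∈ M) ∧ (∀ n ∈ Y, w n = v n) := by
      intro hXM
      refine ⟨fun n => if n ∈ ψ.fv ∨ n ∈ Y then v n else c, ?_, ?_, ?_⟩
      · intro n hn; simp [hn]
      · intro n hn
        by_cases hns : n ∈ ψ.fv ∨ n ∈ Y
        · simp only [if_pos hns]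
          rcases hns with hns | hns
          · by_cases hnX : n ∈ X
            · exact hXM n hnX
            · exact hv n (by simp [Finset.mem_union, hnX, hn])
          · exact absurd hns hn
        · simp only [if_neg hns]; exact hc
      · intro n hn; simp [hn]
    constructor
    · rw [sat_and_iff, satIn_and_iff]
      constructor
      · rintro ⟨hsφ, hsψ⟩
        have hXM := hXv hsφ
        obtain ⟨w, agreeψ, hwY, -⟩ := wfact hXM
        have IHψ := safeAbs M hM ψ Y h2 wψ w hwY
        constructor
        · exact (satIn_congr M φ agreeφ).mpr (IHφ.1.mp ((sat_congr φ agreeφ).mp hsφ))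
        · exact (satIn_congr M ψ agreeψ).mpr (IHψ.1.mp ((sat_congr ψ agreeψ).mp hsψ))
      · rintro ⟨hsφ, hsψ⟩
        have hsatφ : RFormula.sat φ v :=
          (sat_congr φ agreeφ).mpr (IHφ.1.mpr ((satIn_congr M φ agreeφ).mp hsφ))
        have hXM := hXv hsatφ
        obtain ⟨w, agreeψ, hwY, -⟩ := wfact hXM
        have IHψ := safeAbs M hM ψ Y h2 wψ w hwY
        refine ⟨hsatφ, ?_⟩
        exact (sat_congr ψ agreeψ).mpr (IHψ.1.mpr ((satIn_congr M ψ agreeψ).mp hsψ))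
    · intro hsat x hx
      rw [sat_and_iff] at hsat
      have hXM := hXv hsat.1
      rw [Finset.mem_union] at hx
      rcases hx with hx | hx
      · exact hXM x hx
      · obtain ⟨w, agreeψ, hwY, hwv⟩ := wfact hXM
        have IHψ := safeAbs M hM ψ Y h2 wψ w hwY
        have := IHψ.2 ((sat_congr ψ agreeψ).mp hsat.2) x hx
        rwa [hwv x hx] at this
  | ex y φ X hyX h =>
    have wφ : WFForm φ := by cases hw with | ex _ a => exact a
    have hupd : ∀ z : ZFSet.{0}, ∀ n ∉ X, Function.update v y z n ∈ M := by
      intro z n hn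
      have hny : n ≠ y := fun hEq => hn (hEq ▸ hyX)
      rw [Function.update_of_ne hny]
      exact hv n (by simp [Finset.mem_sdiff, hn])
    constructor
    · rw [sat_ex_iff, satIn_ex_iff]
      constructor
      · rintro ⟨z, hz⟩
        have IH := safeAbs M hM φ X h wφ (Function.update v y z) (hupd z)
        refine ⟨z, ?_, IH.1.mp hz⟩
        have := IH.2 hz y hyX
        rwa [Function.update_self] at this
      · rintro ⟨z, _, hz⟩
        have IH := safeAbs M hM φ X h wφ (Function.update v y z) (hupd z)
        exact ⟨z, IH.1.mpr hz⟩
    · intro hsat x hx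
      rw [sat_ex_iff] at hsat
      obtain ⟨z, hz⟩ := hsat
      have IH := safeAbs M hM φ X h wφ (Function.update v y z) (hupd z)
      rw [Finset.mem_sdiff, Finset.mem_singleton] at hx
      have := IH.2 hz x hx.1
      rwa [Function.update_of_ne hx.2] at this
  termination_by sizeOf φ

/-- Absoluteness of a term with one extra variable `x` not occurring in it:
its relativized value agrees with its value in `V` and lies in `M`. -/
theorem atomTermAbs (M : ZFSet.{0}) (hM : ModelRST M) (t : RTerm) (wt : WFTerm t)
    (x : ℕ) (hx : x ∉ t.fv) (v : ℕ → ZFSet.{0}) (hv : ∀ n, n ≠ x → v n ∈ M) :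
    t.eval v = RTerm.evalIn M t v ∧ RTerm.evalIn M t v ∈ M := by
  have hc : v (x + 1) ∈ M := hv (x + 1) (Nat.succ_ne_self x)
  set v' := Function.update v x (v (x + 1)) with hv'def
  have hv'' : ∀ n, v' n ∈ M := by
    intro n
    rcases eq_or_ne n x with rfl | hne
    · simp only [hv'def, Function.update_self]; exact hc
    · simp only [hv'def, Function.update_of_ne hne]; exact hv n hne
  have agree : ∀ n ∈ t.fv, v n = v' n := by
    intro n hn
    have hne : n ≠ x := fun hEq => hx (hEq ▸ hn)
    simp only [hv'def, Function.update_of_ne hne]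
  have e1 : t.eval v = t.eval v' := eval_congr t v v' agree
  have e2 : RTerm.evalIn M t v = RTerm.evalIn M t v' := evalIn_congr M t v v' agree
  have e3 : RTerm.evalIn M t v' = t.eval v' := termAbs M hM t wt v' hv''
  refine ⟨by rw [e1, ← e3, e2], ?_⟩
  rw [e2]
  exact evalIn_mem_model M hM t wt v' hv''
  termination_by sizeOf t + 1
end

end Aux


/-- Every valid term `t` of RST is RST-absolute: in every transitive model `M` of RST,
for all values in `M` of the variables, the relativization `t_M` equals `t` as evaluated
in `V`. -/
theorem term_absolute (t : RTerm) (ht : WFTerm t) (M : ZFSet.{0}) (hM : ModelRST M)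
    (v : ℕ → ZFSet.{0}) (hv : ∀ n, v n ∈ M) :
    RTerm.evalIn M t v = t.eval v :=
  termAbs M hM t ht v hv
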